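/- ∫₀^{x₀} 6x · U((x₀−x)/x₀)/(1 + x⁴) dx < 0, where x₀ = (3/5)^{1/4} and U(τ) = (7τ² − 8τ + 2)τ². -/

import Mathlib

/-!
Substituting `x = x₀ s` turns the integral into `x₀² ∫₀¹ 6 s U(1-s) / (1 + (3/5) s⁴) ds`.
Expanding `1 / (1 + y)` to third order, the remainder `a y⁴ / (1 + y)` with `a = 6 s U(1-s)` is
at most `y⁴ / 4`, because `6 s U(1-s) ≤ 1/4` on `[0, 1]`. This bounds the integrand by a
polynomial, whose integral over `[0, 1]` is `-104653/42542500 < 0`.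
-/

noncomputable def U (τ : ℝ) : ℝ := (7 * τ^2 - 8 * τ + 2) * τ^2

noncomputable def x₀ : ℝ := (3/5 : ℝ) ^ ((1:ℝ)/4)

open intervalIntegral

lemma x₀_pos : 0 < x₀ := Real.rpow_pos_of_pos (by norm_num) _

lemma x₀_pow_four : x₀ ^ 4 = 3 / 5 := by
  rw [x₀, ← Real.rpow_natCast, ← Real.rpow_mul (by norm_num)]
  norm_num

lemma integral_comp_U_eq_mul_integral {a : ℝ} (ha : a ≠ 0) :
    ∫ x in (0:ℝ)..a, 6 * x * U ((a - x) / a) / (1 + x ^ 4)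
      = a ^ 2 * ∫ s in (0:ℝ)..1, 6 * s * U (1 - s) / (1 + a ^ 4 * s ^ 4) := by
  have h := smul_integral_comp_mul_left (fun x => 6 * x * U ((a - x) / a) / (1 + x ^ 4)) a
    (a := 0) (b := 1)
  rw [mul_zero, mul_one] at h
  rw [← h, smul_eq_mul, ← integral_const_mul, ← integral_const_mul]
  congr 1
  ext s
  rw [show (a - a * s) / a = 1 - s by field_simp]
  ring

lemma div_one_add_le {a M y : ℝ} (hy : 0 ≤ y) (ha : a ≤ M) (hM : 0 ≤ M) :
    a / (1 + y) ≤ a * (1 - y + y ^ 2 - y ^ 3) + M * y ^ 4 := by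
  have hremainder : a / (1 + y) = a * (1 - y + y ^ 2 - y ^ 3) + a / (1 + y) * y ^ 4 := by
    field_simp
    ring
  have hquot : a / (1 + y) ≤ M := by
    rcases le_or_gt a 0 with h | h
    · exact (div_nonpos_of_nonpos_of_nonneg h (by linarith)).trans hM
    · exact (div_le_self h.le (by linarith)).trans ha
  rw [hremainder]
  gcongr

lemma mul_U_one_sub_le {s : ℝ} (hs : s ≤ 1) : 6 * s * U (1 - s) ≤ 1 / 4 := by
  have ht : (0:ℝ) ≤ 1112/1000 - s := by linarith
  rw [U]
  -- the squares vanish near the local maxima of `24 s U(1-s)` (≈ 0.92 and ≈ 0.53)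
  nlinarith [mul_nonneg (mul_nonneg ht (sq_nonneg (s - 8695/100000))) (sq_nonneg (s - 78559/100000)),
    mul_nonneg ht (sq_nonneg (s - 8695/100000)), mul_nonneg ht (sq_nonneg (s - 78559/100000))]

lemma integral_rescaled_neg :
    ∫ s in (0:ℝ)..1, 6 * s * U (1 - s) / (1 + 3 / 5 * s ^ 4) < 0 := by
  have hU : Continuous U := by unfold U; fun_prop
  calc ∫ s in (0:ℝ)..1, 6 * s * U (1 - s) / (1 + 3 / 5 * s ^ 4)
      ≤ ∫ s in (0:ℝ)..1, (6 * s * U (1 - s) * (1 - 3 / 5 * s ^ 4 + (3 / 5 * s ^ 4) ^ 2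
          - (3 / 5 * s ^ 4) ^ 3) + 1 / 4 * (3 / 5 * s ^ 4) ^ 4) := by
        refine integral_mono_on zero_le_one ?_ ?_ fun s hs => ?_
        · exact (Continuous.div (by fun_prop) (by fun_prop)
            fun s => by positivity).intervalIntegrable _ _
        · exact (by fun_prop : Continuous _).intervalIntegrable _ _
        · exact div_one_add_le (by positivity) (mul_U_one_sub_le hs.2) (by norm_num)
    _ = -104653 / 42542500 := by
        simp only [U]
        ring_nf
        simp (disch := (apply Continuous.intervalIntegrable; fun_prop)) only
          [integral_add, integral_sub, integral_mul_const, integral_pow, integral_id]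
        norm_num
    _ < 0 := by norm_num

theorem perturbation_integral_neg :
    (∫ x in (0:ℝ)..x₀, 6 * x * U ((x₀ - x) / x₀) / (1 + x^4)) < 0 := by
  rw [integral_comp_U_eq_mul_integral x₀_pos.ne', x₀_pow_four]
  exact mul_neg_of_pos_of_neg (pow_pos x₀_pos 2) integral_rescaled_neg
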